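/- Suppose k+1 unit-speed agents search the n vertices of a regular n-gon inscribed in the unit circle, where the Queen may start at the center and each of the k Servants starts at a vertex, Servants traverse the polygon boundary partitioned into k contiguous arcs as evenly as possible, and the Queen moves to the exit once found. Then the worst-case evacuation cost is at most 1 + (⌈n/k⌉ − 1)·e_n, where e_n = 2·sin(π/n). In particular, the optimal priority evacuation cost on the n-gon with k Servants is at most 1 + (⌈n/k⌉ − 1)·2·sin(π/n). -/

import Mathlib

/-- Vertex `i` of the regular `n`-gon inscribed in the unit circle. -/
noncomputable def vert (n i : ℕ) : EuclideanSpace ℝ (Fin 2) :=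
  WithLp.toLp 2 ![Real.cos (2 * i * Real.pi / n), Real.sin (2 * i * Real.pi / n)]

/-- A feasible strategy for the priority evacuation problem `PE(n,k)`:
`k+1` unit-speed (1-Lipschitz) trajectories (agent `0` is the Queen) such that
every vertex of the `n`-gon is eventually visited by some agent. -/
structure PEStrategy (n k : ℕ) where
  τ : Fin (k + 1) → ℝ → EuclideanSpace ℝ (Fin 2)
  lip : ∀ a, LipschitzWith 1 (τ a)
  covers : ∀ j : Fin n, ∃ t : ℝ, 0 ≤ t ∧ ∃ a, τ a t = vert n ((j : ℕ) + 1)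

/-- The first time vertex `j` is visited by some agent. -/
noncomputable def firstVisit {n k : ℕ} (S : PEStrategy n k) (j : Fin n) : ℝ :=
  sInf {t : ℝ | 0 ≤ t ∧ ∃ a, S.τ a t = vert n ((j : ℕ) + 1)}

/-- The worst-case (over exit placements) evacuation cost of a strategy: visitation
time of the exit plus the Queen's distance to it at that time. -/
noncomputable def evacCost {n k : ℕ} (S : PEStrategy n k) : ℝ :=
  ⨆ j : Fin n, (firstVisit S j + dist (vert n ((j : ℕ) + 1)) (S.τ 0 (firstVisit S j)))

/-!
The Queen waits at the centre, at distance `1` from every vertex, so an exit costs its first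
visitation time plus `1`. With `m = ⌈n/k⌉`, Servant `a` walks at unit speed along the chords
through the `m` consecutive vertices `(a - 1) m + 1, …, a m`; the `k` arcs cover all `n`
vertices, and as each chord has length `2 sin(π/n)`, every vertex is reached by time
`(m - 1) · 2 sin(π/n)`.
-/

section Polyline

variable {E : Type*} [NormedAddCommGroup E] [NormedSpace ℝ E]

noncomputable def clampUnit (x : ℝ) : ℝ := min (max x 0) 1

lemma clampUnit_of_nonpos {x : ℝ} (h : x ≤ 0) : clampUnit x = 0 := by
  simp [clampUnit, max_eq_right h]

lemma clampUnit_of_one_le {x : ℝ} (h : 1 ≤ x) : clampUnit x = 1 := by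
  simp only [clampUnit, min_def, max_def]
  split_ifs <;> linarith

lemma clampUnit_mono : Monotone clampUnit := fun a b h => by
  simp only [clampUnit, min_def, max_def]
  split_ifs <;> linarith

lemma sum_range_clampUnit_sub (u : ℝ) (M : ℕ) :
    ∑ r ∈ Finset.range M, clampUnit (u - r) = min (max u 0) M := by
  induction M with
  | zero => simp
  | succ M ih =>
    rw [Finset.sum_range_succ, ih]
    push_cast
    simp only [clampUnit, min_def, max_def]
    split_ifs <;> linarith

/-- The polygonal path through `p 0, p 1, …, p M`, spending time `c` on each segment
and resting at the endpoints outside `[0, M c]`. -/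
noncomputable def polyline (p : ℕ → E) (c : ℝ) (M : ℕ) (t : ℝ) : E :=
  p 0 + ∑ r ∈ Finset.range M, clampUnit (t / c - r) • (p (r + 1) - p r)

lemma polyline_natCast_mul (p : ℕ → E) {c : ℝ} (hc : 0 < c) {M r : ℕ} (hr : r ≤ M) :
    polyline p c M (r * c) = p r := by
  have hterm : ∀ s ∈ Finset.range M, clampUnit (r * c / c - s) • (p (s + 1) - p s)
      = if s < r then p (s + 1) - p s else 0 := by
    intro s _
    rw [mul_div_cancel_right₀ _ hc.ne']
    split_ifs with hs
    · have : (s : ℝ) + 1 ≤ r := by exact_mod_cast hs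
      rw [clampUnit_of_one_le (by linarith), one_smul]
    · have : (r : ℝ) ≤ s := by exact_mod_cast not_lt.1 hs
      rw [clampUnit_of_nonpos (by linarith), zero_smul]
  have hfilter : (Finset.range M).filter (· < r) = Finset.range r := by
    ext s
    simp only [Finset.mem_filter, Finset.mem_range]
    omega
  rw [polyline, Finset.sum_congr rfl hterm, ← Finset.sum_filter, hfilter,
    Finset.sum_range_sub p, add_sub_cancel]

lemma polyline_zero (p : ℕ → E) (c : ℝ) (M : ℕ) : polyline p c M 0 = p 0 := by
  simp [polyline, clampUnit_of_nonpos]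

lemma polyline_lipschitz (p : ℕ → E) {c : ℝ} (hc : 0 < c) (M : ℕ)
    (hp : ∀ r, dist (p (r + 1)) (p r) ≤ c) : LipschitzWith 1 (polyline p c M) := by
  suffices h : ∀ s t, s ≤ t → dist (polyline p c M t) (polyline p c M s) ≤ t - s by
    refine LipschitzWith.mk_one fun s t => ?_
    rcases le_total s t with hst | hst
    · rw [dist_comm, Real.dist_eq, abs_sub_comm, abs_of_nonneg (by linarith)]
      exact h s t hst
    · rw [Real.dist_eq, abs_of_nonneg (by linarith)]
      exact h t s hst
  intro s t hst
  -- Each segment is traversed at speed at most one, and the time fractions telescope.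
  have hweight : ∀ r : ℕ, clampUnit (s / c - r) ≤ clampUnit (t / c - r) := fun r =>
    clampUnit_mono (by gcongr)
  calc dist (polyline p c M t) (polyline p c M s)
      = ‖∑ r ∈ Finset.range M,
          (clampUnit (t / c - r) - clampUnit (s / c - r)) • (p (r + 1) - p r)‖ := by
        simp only [dist_eq_norm, polyline, add_sub_add_left_eq_sub, ← Finset.sum_sub_distrib,
          sub_smul]
    _ ≤ ∑ r ∈ Finset.range M, (clampUnit (t / c - r) - clampUnit (s / c - r)) * c := by
        refine (norm_sum_le _ _).trans (Finset.sum_le_sum fun r _ => ?_)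
        rw [norm_smul, Real.norm_of_nonneg (sub_nonneg.2 (hweight r)), ← dist_eq_norm]
        exact mul_le_mul_of_nonneg_left (hp r) (sub_nonneg.2 (hweight r))
    _ = (min (max (t / c) 0) M - min (max (s / c) 0) M) * c := by
        rw [← Finset.sum_mul, Finset.sum_sub_distrib, sum_range_clampUnit_sub,
          sum_range_clampUnit_sub]
    _ ≤ (t / c - s / c) * c := by
        have : s / c ≤ t / c := by gcongr
        have hM : (0 : ℝ) ≤ M := M.cast_nonneg
        refine mul_le_mul_of_nonneg_right ?_ hc.le
        simp only [min_def, max_def]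
        split_ifs <;> linarith
    _ = t - s := by field_simp

end Polyline

lemma norm_vert (n i : ℕ) : ‖vert n i‖ = 1 := by
  simp [EuclideanSpace.norm_eq, vert, Fin.sum_univ_two]

lemma vert_add_mul_self (n i q : ℕ) (hn : n ≠ 0) : vert n (i + n * q) = vert n i := by
  have hangle :
      2 * ((i + n * q : ℕ) : ℝ) * Real.pi / n = 2 * i * Real.pi / n + q * (2 * Real.pi) := by
    push_cast
    field_simp
  rw [vert, hangle, Real.cos_add_nat_mul_two_pi, Real.sin_add_nat_mul_two_pi, vert]

lemma dist_vert_succ (n i : ℕ) :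
    dist (vert n (i + 1)) (vert n i) = 2 * Real.sin (Real.pi / n) := by
  rcases eq_or_ne n 0 with rfl | hn
  · simp [vert]
  have hangle :
      2 * ((i + 1 : ℕ) : ℝ) * Real.pi / n = 2 * i * Real.pi / n + 2 * (Real.pi / n) := by
    push_cast
    field_simp
  have hsin : 0 ≤ Real.sin (Real.pi / n) :=
    Real.sin_nonneg_of_nonneg_of_le_pi (by positivity)
      (div_le_self Real.pi_pos.le (by exact_mod_cast Nat.one_le_iff_ne_zero.2 hn))
  rw [EuclideanSpace.dist_eq, ← Real.sqrt_sq (by linarith : 0 ≤ 2 * Real.sin (Real.pi / n))]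
  congr 1
  set x := 2 * (i : ℝ) * Real.pi / n
  set y := Real.pi / n
  simp only [vert, hangle, PiLp.toLp_apply, Fin.sum_univ_two, Matrix.cons_val_zero,
    Matrix.cons_val_one, Real.dist_eq, sq_abs, Real.cos_add, Real.sin_add, Real.cos_two_mul,
    Real.sin_two_mul]
  linear_combination (4 * (Real.cos y ^ 2 - 1) ^ 2 + 4 * Real.sin y ^ 2 * Real.cos y ^ 2)
      * Real.sin_sq_add_cos_sq x + 4 * (Real.cos y ^ 2 - 1) * Real.sin_sq_add_cos_sq y

lemma sin_pi_div_natCast_pos {n : ℕ} (hn : 2 ≤ n) : 0 < Real.sin (Real.pi / n) :=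
  Real.sin_pos_of_pos_of_lt_pi (by positivity)
    (div_lt_self Real.pi_pos (by exact_mod_cast hn))

lemma exists_mem_Icc_vert_eq (n i : ℕ) (hn : n ≠ 0) :
    ∃ m, 1 ≤ m ∧ m ≤ n ∧ vert n (i + 1) = vert n m := by
  refine ⟨i % n + 1, by omega, Nat.mod_lt i (Nat.pos_of_ne_zero hn), ?_⟩
  rw [← vert_add_mul_self n (i % n + 1) (i / n) hn, add_right_comm, Nat.mod_add_div]

lemma le_mul_ceil_div (n k : ℕ) (hk : k ≠ 0) : n ≤ k * ⌈(n : ℝ) / k⌉₊ := by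
  have h := Nat.le_ceil ((n : ℝ) / k)
  rw [div_le_iff₀ (by positivity)] at h
  exact_mod_cast h.trans_eq (mul_comm _ _)

lemma evacCost_le_of_queen_stays_at_center {n k : ℕ} (S : PEStrategy n k) {T : ℝ} (hT : 0 ≤ T)
    (hQ : ∀ t, S.τ 0 t = 0)
    (hvisit : ∀ j : Fin n, ∃ t, 0 ≤ t ∧ t ≤ T ∧ ∃ a, S.τ a t = vert n ((j : ℕ) + 1)) :
    evacCost S ≤ 1 + T := by
  refine Real.iSup_le (fun j => ?_) (by linarith)
  obtain ⟨t, ht0, htT, hvis⟩ := hvisit j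
  have hfirst : firstVisit S j ≤ t := csInf_le ⟨0, fun _ hs => hs.1⟩ ⟨ht0, hvis⟩
  rw [hQ, dist_zero_right, norm_vert]
  linarith

noncomputable def arcWalk (n m : ℕ) {k : ℕ} (a : Fin (k + 1)) : ℝ → EuclideanSpace ℝ (Fin 2) :=
  if a = 0 then 0 else
    polyline (fun r => vert n (((a : ℕ) - 1) * m + r + 1)) (2 * Real.sin (Real.pi / n)) (m - 1)

lemma arcWalk_zero (n m k : ℕ) (t : ℝ) : arcWalk n m (0 : Fin (k + 1)) t = 0 := by
  simp [arcWalk]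

lemma arcWalk_lipschitz {n : ℕ} (hn : 2 ≤ n) (m : ℕ) {k : ℕ} (a : Fin (k + 1)) :
    LipschitzWith 1 (arcWalk n m a) := by
  unfold arcWalk
  split_ifs
  · exact LipschitzWith.const' 0
  · refine polyline_lipschitz _ (by linarith [sin_pi_div_natCast_pos hn]) _ fun r => ?_
    exact (dist_vert_succ n _).le

lemma arcWalk_apply_zero (n m : ℕ) {k : ℕ} {a : Fin (k + 1)} (ha : a ≠ 0) :
    arcWalk n m a 0 = vert n (((a : ℕ) - 1) * m + 1) := by
  simp [arcWalk, ha, polyline_zero]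

/-- Vertex `j + 1` lies on the arc of Servant `j / m + 1`, at position `j % m ≤ m - 1`. -/
lemma exists_arcWalk_eq_vert {n m k : ℕ} (hn : 2 ≤ n) (hm : 0 < m) {j : ℕ} (hj : j < k * m) :
    ∃ t, 0 ≤ t ∧ t ≤ (m - 1 : ℝ) * (2 * Real.sin (Real.pi / n)) ∧
      ∃ a : Fin (k + 1), arcWalk n m a t = vert n (j + 1) := by
  have hc := sin_pi_div_natCast_pos hn
  have hpos : j % m + 1 ≤ m := Nat.mod_lt j hm
  have hpos' : ((j % m : ℕ) : ℝ) ≤ m - 1 := by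
    rw [le_sub_iff_add_le]
    exact_mod_cast hpos
  have ha : j / m + 1 < k + 1 := Nat.succ_lt_succ ((Nat.div_lt_iff_lt_mul hm).2 hj)
  refine ⟨(j % m : ℕ) * (2 * Real.sin (Real.pi / n)), by positivity, by gcongr,
    ⟨j / m + 1, ha⟩, ?_⟩
  have hvisit := polyline_natCast_mul (fun r => vert n ((j / m) * m + r + 1))
    (by linarith : 0 < 2 * Real.sin (Real.pi / n)) (M := m - 1) (by omega : j % m ≤ m - 1)
  simpa [arcWalk, Fin.ext_iff, Nat.div_add_mod'] using hvisit

/-- There is a priority-evacuation strategy on the regular `n`-gon with `k` Servants in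
which the Queen starts at the center and every Servant starts at a vertex, whose
worst-case evacuation cost is at most `1 + (⌈n/k⌉ − 1)·2 sin(π/n)`.  In particular the
optimal cost of `PE(n,k)` is at most this bound. -/
theorem pe_upper_bound_center (n k : ℕ) (hk : 1 ≤ k) (hn : 3 ≤ n) :
    ∃ S : PEStrategy n k,
      S.τ 0 0 = 0 ∧
      (∀ a : Fin (k + 1), a ≠ 0 → ∃ m : ℕ, 1 ≤ m ∧ m ≤ n ∧ S.τ a 0 = vert n m) ∧
      evacCost S ≤ 1 + ((⌈(n : ℝ) / (k : ℝ)⌉₊ : ℝ) - 1) * (2 * Real.sin (Real.pi / n)) := by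
  set m := ⌈(n : ℝ) / (k : ℝ)⌉₊
  have hm : 0 < m := Nat.ceil_pos.2 (by positivity)
  have hvisit (j : Fin n) := exists_arcWalk_eq_vert (n := n) (k := k) (by omega) hm
    (j.isLt.trans_le (le_mul_ceil_div n k (by omega)))
  let S : PEStrategy n k :=
    ⟨arcWalk n m, arcWalk_lipschitz (by omega) m,
      fun j => (hvisit j).imp fun _ h => ⟨h.1, h.2.2⟩⟩
  refine ⟨S, arcWalk_zero n m k 0, fun a ha => ?_, ?_⟩
  · rw [show S.τ a 0 = _ from arcWalk_apply_zero n m ha]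
    exact exists_mem_Icc_vert_eq n _ (by omega)
  · have hT : (0 : ℝ) ≤ (m - 1) * (2 * Real.sin (Real.pi / n)) :=
      mul_nonneg (sub_nonneg.2 (by exact_mod_cast hm))
        (by linarith [sin_pi_div_natCast_pos (n := n) (by omega)])
    exact evacCost_le_of_queen_stays_at_center S hT (arcWalk_zero n m k) hvisit
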